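/- arXiv:2008.00026 — 4 statements merged into one kernel-verified Lean document; each statement's English description precedes it below -/
import Mathlib

section
/- Let N ≥ 1, let S ⊆ ℝ^N be compact, and let f, h ∈ B_S. Let D ⊆ ℝ^N be a measurable set with nonempty interior. If f = h almost everywhere on D, then f = h almost everywhere on ℝ^N (i.e., f = h as elements of L²(ℝ^N)). -/
/-!
If `f =ᵐ 𝓕⁻ F` and `h =ᵐ 𝓕⁻ G` with `F`, `G` integrable and supported in the bounded set `S`,
then along every line `t ↦ x₀ + t • v` the functions `𝓕⁻ F`, `𝓕⁻ G` are restrictions of entire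
functions of `t`: differentiating under the integral is legitimate because the exponent
`2πi t ⟪k, v⟫` stays bounded for `k ∈ S`. Both are continuous, so they agree on the open set
`interior D`, hence near `t = 0` on every line through a point `x₀` of it, and by the identity
theorem on the whole line.
-/

open MeasureTheory FourierTransform Filter

noncomputable section

/-- The Hilbert space `L²(ℝᴺ; ℂ)` of square-integrable functions on `ℝᴺ`. -/
abbrev L2Space (N : ℕ) : Type :=
  Lp ℂ 2 (volume : Measure (EuclideanSpace ℝ (Fin N)))

/-- `f ∈ L²(ℝᴺ)` is bandlimited to `S`: its Fourier transform vanishes (a.e.) outside `S`;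
equivalently, `f` agrees a.e. with the inverse Fourier transform of an integrable function `F`
vanishing outside `S`. -/
def IsBandlimited {N : ℕ} (S : Set (EuclideanSpace ℝ (Fin N))) (f : L2Space N) : Prop :=
  ∃ F : EuclideanSpace ℝ (Fin N) → ℂ,
    Integrable F ∧ (∀ k, k ∉ S → F k = 0) ∧
      (f : EuclideanSpace ℝ (Fin N) → ℂ) =ᵐ[volume] 𝓕⁻ F

/-- Multiplication of `f ∈ L²` by the indicator function `χ_D`, as an element of `L²`. -/
def chiMul {N : ℕ} {D : Set (EuclideanSpace ℝ (Fin N))} (hD : MeasurableSet D)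
    (f : L2Space N) : L2Space N :=
  ((Lp.memLp f).indicator hD).toLp (D.indicator f)

/-- The orthogonal projection of `L²(ℝᴺ)` onto a closed subspace `K`. -/
def projOf {N : ℕ} (K : Submodule ℂ (L2Space N)) (hK : IsClosed (K : Set (L2Space N))) :
    L2Space N → L2Space N :=
  haveI : CompleteSpace K := hK.completeSpace_coe
  fun f => (K.orthogonalProjectionOnto f : L2Space N)

/-- The operator `T_h^{(D)} f = P_S (f + χ_D (h − f))` (single region). -/
def Tsingle {N : ℕ} (K : Submodule ℂ (L2Space N)) (hK : IsClosed (K : Set (L2Space N)))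
    {D : Set (EuclideanSpace ℝ (Fin N))} (hD : MeasurableSet D)
    (h f : L2Space N) : L2Space N :=
  projOf K hK (f + chiMul hD (h - f))

open scoped Topology

open Complex in
theorem differentiable_integral_cexp_mul_smul {α E : Type*} [MeasurableSpace α]
    [NormedAddCommGroup E] [NormedSpace ℂ E] [CompleteSpace E] {μ : Measure α} {g : α → E}
    (hg : Integrable g μ) {b : α → ℂ} (hb : AEStronglyMeasurable b μ) {C : ℝ}
    (hbC : ∀ᵐ a ∂μ, ‖b a‖ ≤ C) :
    Differentiable ℂ fun z => ∫ a, exp (z * b a) • g a ∂μ := by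
  have hexp_le (r : ℝ) : ∀ᵐ a ∂μ, ∀ z : ℂ, ‖z‖ ≤ r → ‖exp (z * b a)‖ ≤ Real.exp (r * C) := by
    filter_upwards [hbC] with a ha z hz
    calc ‖exp (z * b a)‖ ≤ Real.exp (‖z‖ * ‖b a‖) := norm_mul z _ ▸ norm_exp_le_exp_norm _
      _ ≤ Real.exp (r * C) :=
        Real.exp_le_exp.2 (mul_le_mul hz ha (norm_nonneg _) ((norm_nonneg _).trans hz))
  have hmeas (z : ℂ) : AEStronglyMeasurable (fun a => exp (z * b a) • g a) μ :=
    (continuous_exp.comp_aestronglyMeasurable (hb.const_mul z)).smul hg.1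
  intro z₀
  refine (hasDerivAt_integral_of_dominated_loc_of_deriv_le
    (F' := fun z a => (exp (z * b a) * b a) • g a)
    (bound := fun a => (Real.exp ((‖z₀‖ + 1) * C) * C) * ‖g a‖)
    (Metric.ball_mem_nhds z₀ one_pos) (Eventually.of_forall hmeas) ?_ ?_ ?_
    (hg.norm.const_mul _) ?_).2.differentiableAt
  · refine hg.norm.const_mul (Real.exp (‖z₀‖ * C)) |>.mono' (hmeas z₀) ?_
    filter_upwards [hexp_le ‖z₀‖] with a ha
    rw [norm_smul]
    gcongr
    exact ha z₀ le_rfl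
  · exact ((continuous_exp.comp_aestronglyMeasurable (hb.const_mul z₀)).mul hb).smul hg.1
  · filter_upwards [hexp_le (‖z₀‖ + 1), hbC] with a ha hba z hz
    rw [norm_smul, norm_mul]
    gcongr
    exact ha z (norm_le_norm_add_const_of_dist_le (Metric.mem_ball.1 hz).le)
  · exact ae_of_all _ fun a z _ => by
      simpa using (((hasDerivAt_id z).mul_const (b a)).cexp.smul_const (g a))

theorem Differentiable.eq_of_eventually_ofReal_eq {E : Type*} [NormedAddCommGroup E]
    [NormedSpace ℂ E] [CompleteSpace E] {f g : ℂ → E} (hf : Differentiable ℂ f)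
    (hg : Differentiable ℂ g) (hfg : ∀ᶠ t : ℝ in 𝓝 0, f t = g t) : f = g := by
  have hofReal : Tendsto ((↑) : ℝ → ℂ) (𝓝[≠] 0) (𝓝[≠] 0) :=
    Complex.continuous_ofReal.continuousWithinAt.tendsto_nhdsWithin
      fun _ ht => Complex.ofReal_ne_zero.2 ht
  exact AnalyticOnNhd.eq_of_frequently_eq (fun z _ => hf.analyticAt z)
    (fun z _ => hg.analyticAt z)
    (hofReal.frequently (hfg.filter_mono nhdsWithin_le_nhds).frequently)

section InverseFourier

open Complex Real

variable {V E : Type*} [NormedAddCommGroup V] [InnerProductSpace ℝ V] [FiniteDimensional ℝ V]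
  [MeasurableSpace V] [BorelSpace V] [NormedAddCommGroup E] [NormedSpace ℂ E]

theorem MeasureTheory.Integrable.continuous_fourierInv {u : V → E} (hu : Integrable u) :
    Continuous (𝓕⁻ u) :=
  VectorFourier.fourierIntegral_continuous continuous_fourierChar
    (continuous_fst.inner continuous_snd).neg hu

variable [CompleteSpace E]

open scoped RealInnerProductSpace in
theorem exists_differentiable_eq_fourierInv_comp_line {u : V → E} (hu : Integrable u)
    (hu_supp : Bornology.IsBounded (Function.support u)) (x₀ v : V) :
    ∃ φ : ℂ → E, Differentiable ℂ φ ∧ ∀ t : ℝ, φ t = 𝓕⁻ u (x₀ + t • v) := by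
  obtain ⟨R, hR⟩ := hu_supp.subset_closedBall 0
  let b : V → ℂ := fun k => ↑(2 * π * ⟪k, v⟫) * I
  let g : V → E := fun k => exp (↑(2 * π * ⟪k, x₀⟫) * I) • u k
  have hg : Integrable g := by
    refine hu.norm.mono' ((by fun_prop : Continuous fun k : V =>
      exp (↑(2 * π * ⟪k, x₀⟫) * I)).aestronglyMeasurable.smul hu.1) (ae_of_all _ fun k => ?_)
    rw [norm_smul, norm_exp_ofReal_mul_I, one_mul]
  have hb_le : ∀ᵐ k ∂volume.restrict (Metric.closedBall 0 R), ‖b k‖ ≤ 2 * π * (R * ‖v‖) := by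
    refine ae_restrict_of_forall_mem measurableSet_closedBall fun k hk => ?_
    have hk : ‖k‖ ≤ R := mem_closedBall_zero_iff.1 hk
    calc ‖b k‖ = 2 * π * |⟪k, v⟫| := by
          simp [b, abs_of_pos pi_pos]
      _ ≤ 2 * π * (R * ‖v‖) := by
          gcongr
          exact (abs_real_inner_le_norm k v).trans (by gcongr)
  refine ⟨_, differentiable_integral_cexp_mul_smul hg.restrict
    (by fun_prop : Continuous b).aestronglyMeasurable hb_le, fun t => ?_⟩
  rw [setIntegral_eq_integral_of_forall_compl_eq_zero, fourierInv_eq']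
  · congr 1 with k
    simp only [g, b, smul_smul, ← Complex.exp_add, inner_add_right, inner_smul_right]
    push_cast
    ring_nf
  · intro k hk
    simp [g, Function.support_subset_iff'.1 hR k hk]

variable {F G : V → E}

theorem fourierInv_eq_of_eqOn_of_isOpen (hF : Integrable F) (hG : Integrable G)
    (hF_supp : Bornology.IsBounded (Function.support F))
    (hG_supp : Bornology.IsBounded (Function.support G)) {U : Set V} (hU : IsOpen U)
    (hU_ne : U.Nonempty)
    (hFG : Set.EqOn (𝓕⁻ F) (𝓕⁻ G) U) : 𝓕⁻ F = 𝓕⁻ G := by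
  obtain ⟨x₀, hx₀⟩ := hU_ne
  funext x
  obtain ⟨φ, hφ, hφF⟩ := exists_differentiable_eq_fourierInv_comp_line hF hF_supp x₀ (x - x₀)
  obtain ⟨ψ, hψ, hψG⟩ := exists_differentiable_eq_fourierInv_comp_line hG hG_supp x₀ (x - x₀)
  have hline : Tendsto (fun t : ℝ => x₀ + t • (x - x₀)) (𝓝 0) (𝓝 x₀) := by
    simpa using ((continuous_id.smul continuous_const).const_add x₀).tendsto (0 : ℝ)
  have hφψ : φ = ψ := hφ.eq_of_eventually_ofReal_eq hψ <| by
    filter_upwards [hline.eventually (hU.mem_nhds hx₀)] with t ht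
    rw [hφF, hψG, hFG ht]
  simpa using (hφF 1).symm.trans ((congrFun hφψ _).trans (hψG 1))

theorem fourierInv_eq_of_ae_restrict_eq (hF : Integrable F) (hG : Integrable G)
    (hF_supp : Bornology.IsBounded (Function.support F))
    (hG_supp : Bornology.IsBounded (Function.support G)) {D : Set V}
    (hD : (interior D).Nonempty)
    (hFG : 𝓕⁻ F =ᵐ[volume.restrict D] 𝓕⁻ G) : 𝓕⁻ F = 𝓕⁻ G :=
  fourierInv_eq_of_eqOn_of_isOpen hF hG hF_supp hG_supp isOpen_interior hD <|
    Measure.eqOn_open_of_ae_eq (ae_restrict_of_ae_restrict_of_subset interior_subset hFG)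
      isOpen_interior hF.continuous_fourierInv.continuousOn hG.continuous_fourierInv.continuousOn

end InverseFourier

theorem bandlimited_eq_of_eqOn_set_general (N : ℕ)
    (S : Set (EuclideanSpace ℝ (Fin N))) (hS : IsCompact S)
    (f h : L2Space N) (hf : IsBandlimited S f) (hh : IsBandlimited S h)
    (D : Set (EuclideanSpace ℝ (Fin N)))
    (hDint : (interior D).Nonempty)
    (heq : (f : EuclideanSpace ℝ (Fin N) → ℂ) =ᵐ[volume.restrict D]
      (h : EuclideanSpace ℝ (Fin N) → ℂ)) :
    f = h := by
  obtain ⟨F, hF, hF_supp, hfF⟩ := hf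
  obtain ⟨G, hG, hG_supp, hhG⟩ := hh
  have hFG : 𝓕⁻ F = 𝓕⁻ G :=
    fourierInv_eq_of_ae_restrict_eq hF hG
      (hS.isBounded.subset (Function.support_subset_iff'.2 hF_supp))
      (hS.isBounded.subset (Function.support_subset_iff'.2 hG_supp)) hDint <| by
        filter_upwards [ae_restrict_of_ae hfF, ae_restrict_of_ae hhG, heq] with x hfx hhx hx
        rw [← hfx, ← hhx, hx]
  exact Lp.ext (hfF.trans (hFG ▸ hhG.symm))

/-- Two functions `f, h ∈ B_S` (`S` compact) that agree a.e. on a measurable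
set `D` with nonempty interior agree a.e. on all of `ℝᴺ`, i.e. `f = h` in `L²(ℝᴺ)`. -/
theorem bandlimited_eq_of_eqOn_set (N : ℕ) (hN : 1 ≤ N)
    (S : Set (EuclideanSpace ℝ (Fin N))) (hS : IsCompact S)
    (f h : L2Space N) (hf : IsBandlimited S f) (hh : IsBandlimited S h)
    (D : Set (EuclideanSpace ℝ (Fin N))) (hD : MeasurableSet D)
    (hDint : (interior D).Nonempty)
    (heq : (f : EuclideanSpace ℝ (Fin N) → ℂ) =ᵐ[volume.restrict D]
      (h : EuclideanSpace ℝ (Fin N) → ℂ)) :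
    f = h :=
  bandlimited_eq_of_eqOn_set_general N S hS f h hf hh D hDint heq
end
end

section
/- Let N ≥ 1, let S ⊆ ℝ^N be compact, let h ∈ B_S, and let D ⊆ ℝ^N be a measurable set. Then the operator T_h^{(D)} is firmly nonexpansive on B_S: for all f, g ∈ B_S, ‖T_h^{(D)} f − T_h^{(D)} g‖² ≤ ⟨f − g, T_h^{(D)} f − T_h^{(D)} g⟩. -/
open MeasureTheory FourierTransform Filter

noncomputable section

/-! The difference `T f - T g` is `P_S ((1 - χ_D) (f - g))`, and `1 - χ_D` is itself an orthogonal
projection. So for `u = f - g ∈ B_S` and `w = (1 - χ_D) u`, self-adjointness of `P_S` gives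
`⟪u, P_S w⟫ = ⟪u, w⟫ = ‖w‖² ≥ ‖P_S w‖²`. -/

theorem Submodule.norm_starProjection_sq_le_re_inner {𝕜 E : Type*} [RCLike 𝕜]
    [NormedAddCommGroup E] [InnerProductSpace 𝕜 E] (K : Submodule 𝕜 E)
    [K.HasOrthogonalProjection] {u w : E} (hu : u ∈ K) (huw : inner 𝕜 (u - w) w = 0) :
    ‖K.starProjection w‖ ^ 2 ≤ RCLike.re (inner 𝕜 u (K.starProjection w)) := by
  have hinner : inner 𝕜 u (K.starProjection w) = inner 𝕜 w w := by
    rw [← K.inner_starProjection_left_eq_right, K.starProjection_eq_self_iff.mpr hu,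
      ← sub_eq_zero, ← inner_sub_left, huw]
  rw [hinner, inner_self_eq_norm_sq]
  gcongr
  exact K.norm_starProjection_apply_le w

lemma coeFn_chiMul {N : ℕ} {D : Set (EuclideanSpace ℝ (Fin N))} (hD : MeasurableSet D)
    (f : L2Space N) :
    (chiMul hD f : EuclideanSpace ℝ (Fin N) → ℂ) =ᵐ[volume] D.indicator f :=
  MemLp.coeFn_toLp _

lemma chiMul_sub {N : ℕ} {D : Set (EuclideanSpace ℝ (Fin N))} (hD : MeasurableSet D)
    (f g : L2Space N) : chiMul hD (f - g) = chiMul hD f - chiMul hD g := by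
  apply Lp.ext
  filter_upwards [coeFn_chiMul hD (f - g), coeFn_chiMul hD f, coeFn_chiMul hD g,
    Lp.coeFn_sub (chiMul hD f) (chiMul hD g),
    (Lp.coeFn_sub f g).indicator (s := D)] with x hfg hf hg hsub hind
  rw [hfg, hsub, Pi.sub_apply, hf, hg, hind]
  by_cases hx : x ∈ D <;> simp [hx]

lemma inner_chiMul_sub_chiMul {N : ℕ} {D : Set (EuclideanSpace ℝ (Fin N))}
    (hD : MeasurableSet D) (f : L2Space N) :
    inner ℂ (chiMul hD f) (f - chiMul hD f) = 0 := by
  rw [L2.inner_def, ← integral_zero (EuclideanSpace ℝ (Fin N)) ℂ]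
  apply integral_congr_ae
  filter_upwards [coeFn_chiMul hD f, Lp.coeFn_sub f (chiMul hD f)] with x hχ hsub
  rw [hsub, Pi.sub_apply, hχ]
  by_cases hx : x ∈ D <;> simp [hx]

lemma Tsingle_sub_Tsingle {N : ℕ} (K : Submodule ℂ (L2Space N))
    (hK : IsClosed (K : Set (L2Space N))) {D : Set (EuclideanSpace ℝ (Fin N))}
    (hD : MeasurableSet D) (h f g : L2Space N) :
    Tsingle K hK hD h f - Tsingle K hK hD h g =
      projOf K hK (f - g - chiMul hD (f - g)) := by
  have hχ : chiMul hD (h - f) = chiMul hD (h - g) - chiMul hD (f - g) := by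
    rw [← chiMul_sub, sub_sub_sub_cancel_right]
  simp only [Tsingle, projOf]
  rw [← Submodule.coe_sub, ← map_sub, hχ]
  congr 2
  abel

theorem firmly_nonexpansive_single_general (N : ℕ)
    (S : Set (EuclideanSpace ℝ (Fin N)))
    (K : Submodule ℂ (L2Space N))
    (hKset : (K : Set (L2Space N)) = {f : L2Space N | IsBandlimited S f})
    (hK : IsClosed (K : Set (L2Space N)))
    (h : L2Space N)
    (D : Set (EuclideanSpace ℝ (Fin N))) (hD : MeasurableSet D) :
    ∀ f g : L2Space N, IsBandlimited S f → IsBandlimited S g →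
      ‖Tsingle K hK hD h f - Tsingle K hK hD h g‖ ^ 2 ≤
        (inner ℂ (f - g) (Tsingle K hK hD h f - Tsingle K hK hD h g) : ℂ).re := by
  intro f g hf hg
  have : CompleteSpace K := hK.completeSpace_coe
  have hmem (x : L2Space N) (hx : IsBandlimited S x) : x ∈ K := (Set.ext_iff.mp hKset x).mpr hx
  have hfg : f - g ∈ K := K.sub_mem (hmem f hf) (hmem g hg)
  rw [Tsingle_sub_Tsingle]
  refine K.norm_starProjection_sq_le_re_inner hfg ?_
  rw [sub_sub_cancel, inner_chiMul_sub_chiMul]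

/-- For `h ∈ B_S` and `D` measurable, the operator `T_h^{(D)}` is firmly
nonexpansive on `B_S`:
`‖T_h^{(D)} f − T_h^{(D)} g‖² ≤ ⟨f − g, T_h^{(D)} f − T_h^{(D)} g⟩` for all `f, g ∈ B_S`. -/
theorem firmly_nonexpansive_single (N : ℕ) (hN : 1 ≤ N)
    (S : Set (EuclideanSpace ℝ (Fin N))) (hS : IsCompact S)
    (K : Submodule ℂ (L2Space N))
    (hKset : (K : Set (L2Space N)) = {f : L2Space N | IsBandlimited S f})
    (hK : IsClosed (K : Set (L2Space N)))
    (h : L2Space N) (hh : IsBandlimited S h)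
    (D : Set (EuclideanSpace ℝ (Fin N))) (hD : MeasurableSet D) :
    ∀ f g : L2Space N, IsBandlimited S f → IsBandlimited S g →
      ‖Tsingle K hK hD h f - Tsingle K hK hD h g‖ ^ 2 ≤
        (inner ℂ (f - g) (Tsingle K hK hD h f - Tsingle K hK hD h g) : ℂ).re :=
  firmly_nonexpansive_single_general N S K hKset hK h D hD
end
end

section
/- Let N ≥ 1, let S ⊆ ℝ^N be compact, let h ∈ B_S, let D_1, …, D_M ⊆ ℝ^N be bounded measurable sets each with nonempty interior, and let ω_1, …, ω_M ∈ (0,1] with ω_1 + ⋯ + ω_M = 1. Define T_h f = Σ_{m=1}^M ω_m P_S(f + χ_{D_m}(h − f)). Then h is the unique fixed point of T_h in B_S: T_h h = h, and any f ∈ B_S with T_h f = f equals h almost everywhere. -/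
/-! Put `g = h - f`. As `f, h ∈ B_S`, the fixed-point equation reduces to
`∑ ω_m P_S(χ_{D_m} g) = 0`; pairing with `g ∈ B_S` gives `∑ ω_m ‖χ_{D_m} g‖² = 0`, so `g`
vanishes a.e. on each `D_m`. But `g` is the inverse Fourier transform of an integrable function
with bounded support, so along any line `t ↦ c + t b` it extends to an entire function of `t`;
vanishing near a point of the interior of `D_m`, it vanishes identically. -/

open MeasureTheory FourierTransform Filter

noncomputable section

/-- The operator `T_h f = ∑ m, ω m • P_S (f + χ_{D m} (h − f))` (multiple weighted regions). -/
def Tmulti {N : ℕ} (K : Submodule ℂ (L2Space N)) (hK : IsClosed (K : Set (L2Space N)))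
    {M : ℕ} {D : Fin M → Set (EuclideanSpace ℝ (Fin N))} (hD : ∀ m, MeasurableSet (D m))
    (ω : Fin M → ℝ) (h f : L2Space N) : L2Space N :=
  ∑ m, ω m • projOf K hK (f + chiMul (hD m) (h - f))

open scoped InnerProductSpace RealInnerProductSpace Topology

section
variable {α : Type*} [MeasurableSpace α] {μ : Measure α}

lemma norm_cexp_mul_le {z β : ℂ} {r C : ℝ} (hz : ‖z‖ ≤ r) (hβ : ‖β‖ ≤ C) :
    ‖Complex.exp (z * β)‖ ≤ Real.exp (r * C) := by
  refine (Complex.norm_exp_le_exp_norm _).trans (Real.exp_le_exp.2 ?_)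
  rw [norm_mul]
  exact mul_le_mul hz hβ (norm_nonneg _) ((norm_nonneg z).trans hz)

lemma differentiable_integral_cexp_mul {F β : α → ℂ} (hF : Integrable F μ)
    (hβ : AEStronglyMeasurable β μ) {C : ℝ} (hβC : ∀ k, F k ≠ 0 → ‖β k‖ ≤ C) :
    Differentiable ℂ fun z => ∫ k, Complex.exp (z * β k) * F k ∂μ := by
  intro z₀
  have hmeas : ∀ z : ℂ, AEStronglyMeasurable (fun k => Complex.exp (z * β k) * F k) μ :=
    fun z => (Complex.continuous_exp.comp_aestronglyMeasurable (hβ.const_mul z)).mul hF.1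
  have hderiv := hasDerivAt_integral_of_dominated_loc_of_deriv_le
    (F' := fun z k => Complex.exp (z * β k) * β k * F k)
    (bound := fun k => Real.exp ((‖z₀‖ + 1) * C) * C * ‖F k‖)
    (Metric.ball_mem_nhds z₀ one_pos) (Eventually.of_forall hmeas) ?_
    ((hmeas z₀).mul hβ |>.congr (ae_of_all _ fun k => by simp only [Pi.mul_apply]; ring)) ?_
    (hF.norm.const_mul _) (ae_of_all _ fun k z _ => ?_)
  · exact hderiv.2.differentiableAt
  · refine (hF.norm.const_mul (Real.exp (‖z₀‖ * C))).mono' (hmeas z₀) (ae_of_all _ fun k => ?_)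
    rcases eq_or_ne (F k) 0 with hk | hk
    · simp [hk]
    rw [norm_mul]
    exact mul_le_mul_of_nonneg_right (norm_cexp_mul_le le_rfl (hβC k hk)) (norm_nonneg _)
  · refine ae_of_all _ fun k z hz => ?_
    rcases eq_or_ne (F k) 0 with hk | hk
    · simp [hk]
    have hz' : ‖z‖ ≤ ‖z₀‖ + 1 := by
      have := norm_le_norm_add_norm_sub' z z₀
      rw [Metric.mem_ball, dist_eq_norm] at hz
      linarith
    rw [norm_mul, norm_mul]
    gcongr
    exacts [norm_cexp_mul_le hz' (hβC k hk), hβC k hk]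
  · simpa [mul_comm, mul_assoc] using
      (((hasDerivAt_id z).mul_const (β k)).cexp).mul_const (F k)

end

section
variable {V : Type*} [NormedAddCommGroup V] [InnerProductSpace ℝ V] [FiniteDimensional ℝ V]
  [MeasurableSpace V] [BorelSpace V]

lemma fourierInv_add_smul (F : V → ℂ) (c b : V) (t : ℝ) :
    𝓕⁻ F (c + t • b) = ∫ v, Complex.exp (t * ((2 * Real.pi * ⟪v, b⟫ : ℝ) * Complex.I)) *
      (Complex.exp ((2 * Real.pi * ⟪v, c⟫ : ℝ) * Complex.I) * F v) := by
  rw [Real.fourierInv_eq']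
  congr 1 with v
  rw [smul_eq_mul, ← mul_assoc, ← Complex.exp_add, inner_add_right, real_inner_smul_right]
  push_cast
  ring_nf

lemma analyticOnNhd_fourierInv_comp_line {F : V → ℂ} (hF : Integrable F) {R : ℝ}
    (hR : ∀ k, F k ≠ 0 → ‖k‖ ≤ R) (c b : V) :
    AnalyticOnNhd ℝ (fun t : ℝ => 𝓕⁻ F (c + t • b)) Set.univ := by
  have hG : Integrable (fun v => Complex.exp ((2 * Real.pi * ⟪v, c⟫ : ℝ) * Complex.I) * F v) :=
    hF.bdd_mul (c := 1) (by fun_prop) (ae_of_all _ fun v => by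
      rw [Complex.norm_exp_ofReal_mul_I])
  have hL := differentiable_integral_cexp_mul hG (C := 2 * Real.pi * R * ‖b‖)
    (β := fun v => ((2 * Real.pi * ⟪v, b⟫ : ℝ) : ℂ) * Complex.I) (by fun_prop) fun v hv => by
      have hv' : ‖v‖ ≤ R := hR v (right_ne_zero_of_mul hv)
      rw [norm_mul, Complex.norm_I, mul_one, Complex.norm_real, Real.norm_eq_abs, abs_mul,
        abs_of_pos Real.two_pi_pos, mul_assoc _ R]
      gcongr
      exact (abs_real_inner_le_norm v b).trans (by gcongr)
  intro t _
  simp_rw [fourierInv_add_smul]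
  exact (hL.analyticAt (t : ℂ)).restrictScalars.comp (Complex.ofRealCLM.analyticAt t)

lemma fourierInv_eq_zero_of_eqOn_open {F : V → ℂ} (hF : Integrable F) {R : ℝ}
    (hR : ∀ k, F k ≠ 0 → ‖k‖ ≤ R) {U : Set V} (hU : IsOpen U) (hUne : U.Nonempty)
    (h0 : Set.EqOn (𝓕⁻ F) 0 U) : 𝓕⁻ F = 0 := by
  obtain ⟨c, hc⟩ := hUne
  funext x
  have hline : Tendsto (fun t : ℝ => c + t • (x - c)) (𝓝 0) (𝓝 c) := by
    have hcont : Continuous fun t : ℝ => c + t • (x - c) := by fun_prop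
    simpa using hcont.tendsto 0
  have hnear : (fun t : ℝ => 𝓕⁻ F (c + t • (x - c))) =ᶠ[𝓝 0] 0 :=
    (hline.eventually (hU.mem_nhds hc)).mono fun t ht => h0 ht
  simpa using (analyticOnNhd_fourierInv_comp_line hF hR c (x - c)
    ).eqOn_zero_of_preconnected_of_eventuallyEq_zero isPreconnected_univ (Set.mem_univ 0) hnear
    (Set.mem_univ 1)

lemma continuous_fourierInv_of_integrable {F : V → ℂ} (hF : Integrable F) : Continuous (𝓕⁻ F) :=
  VectorFourier.fourierIntegral_continuous Real.continuous_fourierChar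
    (continuous_inner.neg : Continuous fun p : V × V => -⟪p.1, p.2⟫) hF

lemma fourierInv_eq_zero_of_ae_eq_zero_on {F : V → ℂ} (hF : Integrable F) {R : ℝ}
    (hR : ∀ k, F k ≠ 0 → ‖k‖ ≤ R) {D : Set V} (hD : (interior D).Nonempty)
    (h0 : ∀ᵐ x, x ∈ D → 𝓕⁻ F x = 0) : 𝓕⁻ F = 0 := by
  refine fourierInv_eq_zero_of_eqOn_open hF hR isOpen_interior hD ?_
  refine Measure.eqOn_open_of_ae_eq (μ := volume) ?_ isOpen_interior
    (continuous_fourierInv_of_integrable hF).continuousOn continuousOn_const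
  exact (ae_restrict_iff' measurableSet_interior).2
    (h0.mono fun x hx hxD => hx (interior_subset hxD))

end

section L2

variable {N : ℕ}

lemma projOf_eq_starProjection (K : Submodule ℂ (L2Space N))
    (hK : IsClosed (K : Set (L2Space N))) [CompleteSpace K] (f : L2Space N) :
    projOf K hK f = K.starProjection f :=
  rfl

variable {D : Set (EuclideanSpace ℝ (Fin N))}

lemma chiMul_coeFn (hD : MeasurableSet D) (f : L2Space N) :
    ⇑(chiMul hD f) =ᵐ[volume] D.indicator f :=
  MemLp.coeFn_toLp _

lemma chiMul_zero (hD : MeasurableSet D) : chiMul hD (0 : L2Space N) = 0 := by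
  rw [Lp.eq_zero_iff_ae_eq_zero]
  filter_upwards [chiMul_coeFn hD 0] with x hx
  by_cases hxD : x ∈ D <;> simp [hx, hxD]

lemma chiMul_eq_zero_iff (hD : MeasurableSet D) (f : L2Space N) :
    chiMul hD f = 0 ↔ ∀ᵐ x, x ∈ D → f x = 0 := by
  rw [Lp.eq_zero_iff_ae_eq_zero]
  constructor
  · intro h0
    filter_upwards [h0, chiMul_coeFn hD f] with x h0x hx hxD
    simpa [hx, hxD] using h0x
  · intro h0
    filter_upwards [h0, chiMul_coeFn hD f] with x h0x hx
    by_cases hxD : x ∈ D <;> simp [hx, hxD, h0x]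

lemma inner_chiMul_left_eq_inner_chiMul_chiMul (hD : MeasurableSet D) (f g : L2Space N) :
    ⟪chiMul hD f, g⟫_ℂ = ⟪chiMul hD f, chiMul hD g⟫_ℂ := by
  rw [L2.inner_def, L2.inner_def]
  refine integral_congr_ae ?_
  filter_upwards [chiMul_coeFn hD f, chiMul_coeFn hD g] with x hf hg
  by_cases hxD : x ∈ D <;> simp [hf, hg, hxD]

end L2

lemma eq_zero_of_sum_smul_starProjection_eq_zero {E ι : Type*} [NormedAddCommGroup E]
    [InnerProductSpace ℂ E] [Fintype ι] (K : Submodule ℂ E) [K.HasOrthogonalProjection]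
    {ω : ι → ℝ} (hω : ∀ i, 0 < ω i) {Q : ι → E} {g : E} (hg : g ∈ K)
    (hQ : ∀ i, ⟪Q i, g⟫_ℂ = ⟪Q i, Q i⟫_ℂ)
    (hsum : ∑ i, ω i • K.starProjection (Q i) = 0) (i : ι) : Q i = 0 := by
  have hpair : ⟪∑ i, ω i • K.starProjection (Q i), g⟫_ℂ = 0 := by rw [hsum, inner_zero_left]
  simp only [sum_inner, RCLike.real_smul_eq_coe_smul (K := ℂ), inner_smul_real_left,
    K.inner_starProjection_left_eq_right, K.starProjection_eq_self_iff.2 hg, hQ] at hpair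
  have hnorms : ∑ i, ω i * ‖Q i‖ ^ 2 = 0 := by
    have := congrArg Complex.re hpair
    rw [Complex.re_sum] at this
    simpa only [smul_eq_mul, ← RCLike.re_to_complex, RCLike.re_ofReal_mul, map_zero,
      inner_self_eq_norm_sq] using this
  have hi := (Finset.sum_eq_zero_iff_of_nonneg fun i _ => by have := hω i; positivity).1 hnorms i
    (Finset.mem_univ i)
  simpa [(hω i).ne'] using hi

lemma Tmulti_eq_add {N : ℕ} (K : Submodule ℂ (L2Space N)) (hK : IsClosed (K : Set (L2Space N)))
    {M : ℕ} {D : Fin M → Set (EuclideanSpace ℝ (Fin N))} (hD : ∀ m, MeasurableSet (D m))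
    [CompleteSpace K] {ω : Fin M → ℝ} (hω : ∑ m, ω m = 1) (h : L2Space N) {f : L2Space N}
    (hf : f ∈ K) :
    Tmulti K hK hD ω h f = f + ∑ m, ω m • K.starProjection (chiMul (hD m) (h - f)) := by
  simp only [Tmulti, projOf_eq_starProjection, map_add, K.starProjection_eq_self_iff.2 hf,
    smul_add, Finset.sum_add_distrib, ← Finset.sum_smul, hω, one_smul]

theorem IsBandlimited.eq_zero_of_ae_eq_zero_on {N : ℕ} {S : Set (EuclideanSpace ℝ (Fin N))}
    (hS : Bornology.IsBounded S) {f : L2Space N} (hf : IsBandlimited S f)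
    {D : Set (EuclideanSpace ℝ (Fin N))} (hD : (interior D).Nonempty)
    (h0 : ∀ᵐ x, x ∈ D → f x = 0) : f = 0 := by
  obtain ⟨F, hF, hFS, hfF⟩ := hf
  obtain ⟨R, hR⟩ := isBounded_iff_forall_norm_le.1 hS
  have hFR : ∀ k, F k ≠ 0 → ‖k‖ ≤ R := fun k hk => hR k (by_contra fun hkS => hk (hFS k hkS))
  have hFinv : 𝓕⁻ F = 0 := fourierInv_eq_zero_of_ae_eq_zero_on hF hFR hD <| by
    filter_upwards [h0, hfF] with x h0x hx hxD
    rw [← hx, h0x hxD]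
  rw [Lp.eq_zero_iff_ae_eq_zero]
  exact hfF.trans (EventuallyEq.of_eq hFinv)

theorem fixedPoint_unique_multi_general (N : ℕ)
    (S : Set (EuclideanSpace ℝ (Fin N))) (hS : IsCompact S)
    (K : Submodule ℂ (L2Space N))
    (hKset : (K : Set (L2Space N)) = {f : L2Space N | IsBandlimited S f})
    (hK : IsClosed (K : Set (L2Space N)))
    (h : L2Space N) (hh : IsBandlimited S h)
    (M : ℕ) (D : Fin M → Set (EuclideanSpace ℝ (Fin N))) (hD : ∀ m, MeasurableSet (D m))
    (hDint : ∀ m, (interior (D m)).Nonempty)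
    (ω : Fin M → ℝ) (hω : ∀ m, ω m ∈ Set.Ioc (0 : ℝ) 1) (hωsum : ∑ m, ω m = 1) :
    Tmulti K hK hD ω h h = h ∧
      ∀ f : L2Space N, IsBandlimited S f → Tmulti K hK hD ω h f = f → f = h := by
  have : CompleteSpace K := hK.completeSpace_coe
  have hmem : ∀ f, f ∈ K ↔ IsBandlimited S f := fun f => Set.ext_iff.1 hKset f
  have hhK := (hmem h).2 hh
  refine ⟨by simp [Tmulti_eq_add K hK hD hωsum h hhK, chiMul_zero], fun f hf hfix => ?_⟩
  have hgK : h - f ∈ K := K.sub_mem hhK ((hmem f).2 hf)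
  have hsum : ∑ m, ω m • K.starProjection (chiMul (hD m) (h - f)) = 0 := by
    rw [Tmulti_eq_add K hK hD hωsum h ((hmem f).2 hf)] at hfix
    exact add_eq_left.1 hfix
  obtain ⟨m₀, -⟩ := Finset.nonempty_of_sum_ne_zero (hωsum ▸ one_ne_zero)
  have hχ := eq_zero_of_sum_smul_starProjection_eq_zero K (fun m => (hω m).1) hgK
    (fun m => inner_chiMul_left_eq_inner_chiMul_chiMul (hD m) (h - f) (h - f)) hsum m₀
  have hg := ((hmem _).1 hgK).eq_zero_of_ae_eq_zero_on hS.isBounded (hDint m₀)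
    ((chiMul_eq_zero_iff (hD m₀) _).1 hχ)
  exact (sub_eq_zero.1 hg).symm

/-- For `h ∈ B_S`, bounded measurable sets `D_1, …, D_M` each with nonempty
interior, and convex weights `ω_m ∈ (0,1]` with `∑ ω_m = 1`, the function `h` is the unique
fixed point of `T_h f = ∑ m, ω_m P_S(f + χ_{D_m}(h − f))` in `B_S`. -/
theorem fixedPoint_unique_multi (N : ℕ) (hN : 1 ≤ N)
    (S : Set (EuclideanSpace ℝ (Fin N))) (hS : IsCompact S)
    (K : Submodule ℂ (L2Space N))
    (hKset : (K : Set (L2Space N)) = {f : L2Space N | IsBandlimited S f})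
    (hK : IsClosed (K : Set (L2Space N)))
    (h : L2Space N) (hh : IsBandlimited S h)
    (M : ℕ) (D : Fin M → Set (EuclideanSpace ℝ (Fin N))) (hD : ∀ m, MeasurableSet (D m))
    (hDbdd : ∀ m, Bornology.IsBounded (D m)) (hDint : ∀ m, (interior (D m)).Nonempty)
    (ω : Fin M → ℝ) (hω : ∀ m, ω m ∈ Set.Ioc (0 : ℝ) 1) (hωsum : ∑ m, ω m = 1) :
    Tmulti K hK hD ω h h = h ∧
      ∀ f : L2Space N, IsBandlimited S f → Tmulti K hK hD ω h f = f → f = h :=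
  fixedPoint_unique_multi_general N S hS K hKset hK h hh M D hD hDint ω hω hωsum
end
end

section
/- Let N ≥ 1, let S ⊆ ℝ^N be compact, let D ⊆ ℝ^N be a bounded measurable set, and let ψ_0, …, ψ_N' be an orthonormal family in B_S consisting of eigenfunctions of the operator A_D : B_S → B_S, A_D f = P_S(χ_D f), with eigenvalues λ_0, …, λ_{N'} ∈ (0,1) satisfying λ_n ≥ λ_{N'} for all 0 ≤ n ≤ N'. Let h be in the linear span V of ψ_0, …, ψ_{N'} and suppose T_h^{(D)} maps V into V. Then T_h^{(D)} is a Banach contraction on V with Lipschitz constant 1 − λ_{N'}: for all f, g ∈ V, ‖T_h^{(D)} f − T_h^{(D)} g‖ ≤ (1 − λ_{N'})‖f − g‖, and 0 < 1 − λ_{N'} < 1. -/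
open MeasureTheory FourierTransform Filter

noncomputable section

/-
On the span `V` of the eigenfunctions, `T_h f - T_h g = (I - A_D)(f - g)` because `P_S` fixes
`f - g ∈ V ⊆ B_S` and the `h`-terms cancel. In the orthonormal eigenbasis `I - A_D` is diagonal
with entries `1 - λ_n ∈ (0, 1 - λ_{N'}]`, so Parseval bounds its norm on `V` by `1 - λ_{N'}`.
-/

section Orthonormal

variable {ι 𝕜 E : Type*} [Fintype ι] [RCLike 𝕜] [NormedAddCommGroup E] [InnerProductSpace 𝕜 E]
  {v : ι → E}

theorem Orthonormal.norm_sum_smul_sq (hv : Orthonormal 𝕜 v) (c : ι → 𝕜) :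
    ‖∑ i, c i • v i‖ ^ 2 = ∑ i, ‖c i‖ ^ 2 := by
  simpa using hv.orthogonalFamily.norm_sum c Finset.univ

theorem Orthonormal.norm_apply_le_of_mem_span (hv : Orthonormal 𝕜 v) {L : E →ₗ[𝕜] E}
    {μ : ι → 𝕜} (hL : ∀ i, L (v i) = μ i • v i) {C : ℝ} (hC : ∀ i, ‖μ i‖ ≤ C) {x : E}
    (hx : x ∈ Submodule.span 𝕜 (Set.range v)) : ‖L x‖ ≤ C * ‖x‖ := by
  obtain ⟨c, rfl⟩ := (Submodule.mem_span_range_iff_exists_fun 𝕜).1 hx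
  rcases isEmpty_or_nonempty ι with _ | ⟨⟨i₀⟩⟩
  · simp
  have hC₀ : 0 ≤ C := (norm_nonneg _).trans (hC i₀)
  have hLx : L (∑ i, c i • v i) = ∑ i, (c i * μ i) • v i := by
    simp only [map_sum, map_smul, hL, smul_smul]
  refine (pow_le_pow_iff_left₀ (norm_nonneg _) (by positivity) two_ne_zero).1 ?_
  calc ‖L (∑ i, c i • v i)‖ ^ 2 = ∑ i, ‖c i‖ ^ 2 * ‖μ i‖ ^ 2 := by
        simp only [hLx, hv.norm_sum_smul_sq, norm_mul, mul_pow]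
    _ ≤ ∑ i, ‖c i‖ ^ 2 * C ^ 2 := by gcongr with i; exact hC i
    _ = (C * ‖∑ i, c i • v i‖) ^ 2 := by
        rw [mul_pow, hv.norm_sum_smul_sq, Finset.mul_sum]; simp only [mul_comm]

end Orthonormal

section ConcentrationOperator

variable {N : ℕ} {D : Set (EuclideanSpace ℝ (Fin N))} (hD : MeasurableSet D)

def chiMulₗ : L2Space N →ₗ[ℂ] L2Space N where
  toFun := chiMul hD
  map_add' a b := by
    simp only [chiMul, ← MemLp.toLp_add]
    refine MemLp.toLp_congr _ _ <| (Lp.coeFn_add a b).mono fun x hx => ?_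
    by_cases hxD : x ∈ D
    · simp only [Set.indicator_of_mem hxD, hx, Pi.add_apply]
    · simp only [Set.indicator_of_notMem hxD, Pi.add_apply, add_zero]
  map_smul' c a := by
    simp only [chiMul, RingHom.id_apply, ← MemLp.toLp_const_smul]
    refine MemLp.toLp_congr _ _ <| (Lp.coeFn_smul c a).mono fun x hx => ?_
    by_cases hxD : x ∈ D
    · simp only [Set.indicator_of_mem hxD, hx, Pi.smul_apply]
    · simp only [Set.indicator_of_notMem hxD, Pi.smul_apply, smul_zero]

variable {K : Submodule ℂ (L2Space N)} (hK : IsClosed (K : Set (L2Space N)))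

/-- The concentration operator `A_D = P_S ∘ χ_D`. -/
def concentrationOp : L2Space N →ₗ[ℂ] L2Space N :=
  haveI := hK.completeSpace_coe
  K.starProjection.toLinearMap ∘ₗ chiMulₗ hD

theorem concentrationOp_apply (f : L2Space N) :
    concentrationOp hD hK f = projOf K hK (chiMul hD f) :=
  rfl

theorem Tsingle_sub_Tsingle_s15 (h : L2Space N) {f g : L2Space N} (hfg : f - g ∈ K) :
    Tsingle K hK hD h f - Tsingle K hK hD h g =
      (LinearMap.id - concentrationOp hD hK : L2Space N →ₗ[ℂ] L2Space N) (f - g) := by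
  have := hK.completeSpace_coe
  calc Tsingle K hK hD h f - Tsingle K hK hD h g
      = K.starProjection ((f - g) - chiMulₗ hD (f - g)) := by
        change K.starProjection _ - K.starProjection _ = _
        rw [← map_sub]
        congr 1
        change f + chiMulₗ hD (h - f) - (g + chiMulₗ hD (h - g)) = _
        simp only [map_sub]
        abel
    _ = _ := by rw [map_sub, K.starProjection_eq_self_iff.2 hfg]; rfl

end ConcentrationOperator

theorem truncated_pswf_contraction_general (N : ℕ)
    (S : Set (EuclideanSpace ℝ (Fin N)))
    (K : Submodule ℂ (L2Space N))
    (hKset : (K : Set (L2Space N)) = {f : L2Space N | IsBandlimited S f})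
    (hK : IsClosed (K : Set (L2Space N)))
    (D : Set (EuclideanSpace ℝ (Fin N))) (hD : MeasurableSet D)
    (n' : ℕ) (ψ : Fin (n' + 1) → L2Space N) (hψmem : ∀ n, IsBandlimited S (ψ n))
    (hψon : Orthonormal ℂ ψ)
    (lam : Fin (n' + 1) → ℝ) (hlam : ∀ n, lam n ∈ Set.Ioo (0 : ℝ) 1)
    (hlast : ∀ n, lam (Fin.last n') ≤ lam n)
    (heig : ∀ n, projOf K hK (chiMul hD (ψ n)) = (lam n : ℂ) • ψ n)
    (h : L2Space N) :
    (∀ f g : L2Space N, f ∈ Submodule.span ℂ (Set.range ψ) →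
        g ∈ Submodule.span ℂ (Set.range ψ) →
          ‖Tsingle K hK hD h f - Tsingle K hK hD h g‖ ≤
            (1 - lam (Fin.last n')) * ‖f - g‖) ∧
      0 < 1 - lam (Fin.last n') ∧ 1 - lam (Fin.last n') < 1 := by
  have hlast_mem := hlam (Fin.last n')
  refine ⟨fun f g hf hg => ?_, by linarith [hlast_mem.2], by linarith [hlast_mem.1]⟩
  have hspan_le : Submodule.span ℂ (Set.range ψ) ≤ K := by
    refine Submodule.span_le.2 <| Set.range_subset_iff.2 fun n => ?_
    exact hKset ▸ hψmem n
  have hfg := Submodule.sub_mem _ hf hg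
  rw [Tsingle_sub_Tsingle_s15 hD hK h (hspan_le hfg)]
  refine hψon.norm_apply_le_of_mem_span (μ := fun n => ((1 - lam n : ℝ) : ℂ)) (fun n => ?_)
    (fun n => ?_) hfg
  · simp [concentrationOp_apply, heig, sub_smul]
  · rw [Complex.norm_real, Real.norm_of_nonneg (by linarith [(hlam n).2])]
    linarith [hlast n]

/-- Let `ψ_0, …, ψ_{N'}` be an orthonormal family in `B_S` of eigenfunctions
of `A_D f = P_S(χ_D f)` with eigenvalues `λ_n ∈ (0,1)` satisfying `λ_n ≥ λ_{N'}` for all `n`.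
If `h` lies in the span `V` of the `ψ_n` and `T_h^{(D)}` maps `V` into `V`, then `T_h^{(D)}`
is a Banach contraction on `V` with Lipschitz constant `1 − λ_{N'} ∈ (0,1)`. -/
theorem truncated_pswf_contraction (N : ℕ) (hN : 1 ≤ N)
    (S : Set (EuclideanSpace ℝ (Fin N))) (hS : IsCompact S)
    (K : Submodule ℂ (L2Space N))
    (hKset : (K : Set (L2Space N)) = {f : L2Space N | IsBandlimited S f})
    (hK : IsClosed (K : Set (L2Space N)))
    (D : Set (EuclideanSpace ℝ (Fin N))) (hD : MeasurableSet D)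
    (hDbdd : Bornology.IsBounded D)
    (n' : ℕ) (ψ : Fin (n' + 1) → L2Space N) (hψmem : ∀ n, IsBandlimited S (ψ n))
    (hψon : Orthonormal ℂ ψ)
    (lam : Fin (n' + 1) → ℝ) (hlam : ∀ n, lam n ∈ Set.Ioo (0 : ℝ) 1)
    (hlast : ∀ n, lam (Fin.last n') ≤ lam n)
    (heig : ∀ n, projOf K hK (chiMul hD (ψ n)) = (lam n : ℂ) • ψ n)
    (h : L2Space N) (hh : h ∈ Submodule.span ℂ (Set.range ψ))
    (hmaps : ∀ f : L2Space N, f ∈ Submodule.span ℂ (Set.range ψ) →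
      Tsingle K hK hD h f ∈ Submodule.span ℂ (Set.range ψ)) :
    (∀ f g : L2Space N, f ∈ Submodule.span ℂ (Set.range ψ) →
        g ∈ Submodule.span ℂ (Set.range ψ) →
          ‖Tsingle K hK hD h f - Tsingle K hK hD h g‖ ≤
            (1 - lam (Fin.last n')) * ‖f - g‖) ∧
      0 < 1 - lam (Fin.last n') ∧ 1 - lam (Fin.last n') < 1 :=
  truncated_pswf_contraction_general N S K hKset hK D hD n' ψ hψmem hψon lam hlam hlast heig h
end
end
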